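/- Let P and P̃ be skip-free stochastic matrices on E_k = {0,...,k}, and let both Markov chains start at state 0 (initial law δ_0). Suppose there exists an integer m with 1 ≤ m ≤ k-1 such that: (i) T_m ⪯_st T̃_m, i.e. for every n ∈ ℕ, ∑_{0≤j≤m-1} (Q_m^n)_{0,j} ≤ ∑_{0≤j≤m-1} (Q̃_m^n)_{0,j}; and (ii) for every i with m ≤ i ≤ k-1, p̃_{i,i+1} ≤ p_{i,i+1} and p̃_{i,0} + p̃_{i,i+1} = 1. Then T_i ⪯_st T̃_i for every i with m ≤ i ≤ k, i.e. for each such i and every n ∈ ℕ, ∑_{0≤j≤i-1} (Q_i^n)_{0,j} ≤ ∑_{0≤j≤i-1} (Q̃_i^n)_{0,j}. -/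

import Mathlib

open Finset Matrix

/-- A (row-)stochastic matrix. -/
def IsStochastic {m : ℕ} (P : Matrix (Fin m) (Fin m) ℝ) : Prop :=
  (∀ i j, 0 ≤ P i j) ∧ ∀ i, ∑ j, P i j = 1

/-- Skip-free (on the right): `p_{i,j} = 0` whenever `j > i+1`. -/
def SkipFree {m : ℕ} (P : Matrix (Fin m) (Fin m) ℝ) : Prop :=
  ∀ i j : Fin m, (i : ℕ) + 1 < (j : ℕ) → P i j = 0

/-- The survival function for the chain started at `0`:
`P(T_h > n) = ∑_{0 ≤ j ≤ h-1} (Q_h^n)_{0,j}`,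
where `Q_h` is the leading `h × h` submatrix of `P`. -/
noncomputable def hitSurvival0 {k : ℕ} (P : Matrix (Fin (k + 1)) (Fin (k + 1)) ℝ)
    (h : ℕ) (h1 : 0 < h) (h2 : h ≤ k) (n : ℕ) : ℝ :=
  ∑ j : Fin h,
    ((P.submatrix (Fin.castLE (h2.trans k.le_succ)) (Fin.castLE (h2.trans k.le_succ))) ^ n)
      ⟨0, h1⟩ j

/-!
Induction on the level `i ≥ m`. Write `w(r) = P(T_i > r)` and let `g` be the survival function
of `T_{i+1}` for the chain started at `i`. A skip-free chain reaches `i` before `i + 1`, so the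
first-passage decomposition at `i` expresses `P(T_{i+1} > n)` through `w` and `g`; after summation
by parts this expression is increasing in `w` (as `g` is decreasing) and in `g` (as `w` is
decreasing). It remains to compare `g` with `g̃`. From `i` the tilde chain either moves up or
resets to `0`, so `g̃(r + 1) = p̃_{i,0} P(T̃_{i+1} > r)`, whereas `g(r + 1) ≤ (1 - p_{i,i+1})
P(T_{i+1} > r)` because a skip-free chain started higher survives less long. Since
`p̃_{i,0} = 1 - p̃_{i,i+1} ≥ 1 - p_{i,i+1}`, a strong induction on `n` concludes.
-/

section Survival

variable {ι : Type*} (P : Matrix ι ι ℝ)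

/-- `survivalIn P s n x` is the probability that `X_1, …, X_n ∈ s` for the chain started at `x`
(which need not lie in `s`). -/
noncomputable def survivalIn (s : Finset ι) : ℕ → ι → ℝ
  | 0, _ => 1
  | n + 1, x => ∑ y ∈ s, P x y * survivalIn s n y

variable {P}

@[simp]
theorem survivalIn_zero (s : Finset ι) (x : ι) : survivalIn P s 0 x = 1 := rfl

theorem survivalIn_succ (s : Finset ι) (n : ℕ) (x : ι) :
    survivalIn P s (n + 1) x = ∑ y ∈ s, P x y * survivalIn P s n y := rfl

theorem survivalIn_nonneg (hP0 : ∀ x y, 0 ≤ P x y) (s : Finset ι) (n : ℕ) (x : ι) :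
    0 ≤ survivalIn P s n x := by
  induction n generalizing x with
  | zero => exact zero_le_one
  | succ n ih => exact Finset.sum_nonneg fun y _ => mul_nonneg (hP0 x y) (ih y)

variable [Fintype ι]

theorem sum_row_le_one (hP0 : ∀ x y, 0 ≤ P x y) (hP1 : ∀ x, ∑ y, P x y = 1)
    (s : Finset ι) (x : ι) : ∑ y ∈ s, P x y ≤ 1 :=
  (Finset.sum_le_sum_of_subset_of_nonneg (Finset.subset_univ s) fun y _ _ => hP0 x y).trans
    (hP1 x).le

theorem survivalIn_antitone (hP0 : ∀ x y, 0 ≤ P x y) (hP1 : ∀ x, ∑ y, P x y = 1)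
    (s : Finset ι) (x : ι) : Antitone fun n => survivalIn P s n x := by
  refine antitone_nat_of_succ_le fun n => ?_
  induction n generalizing x with
  | zero => simpa [survivalIn_succ] using sum_row_le_one hP0 hP1 s x
  | succ n ih =>
    exact Finset.sum_le_sum fun y _ => mul_le_mul_of_nonneg_left (ih y) (hP0 x y)

end Survival

section Renewal

/-- First-passage decomposition through a gate state: `w s - w (s + 1)` is the probability of
reaching the gate at time `s + 1`, and `g` is the survival function from the gate. -/
def renewal (w g : ℕ → ℝ) (n : ℕ) : ℝ :=
  w n + ∑ s ∈ range n, (w s - w (s + 1)) * g (n - 1 - s)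

variable {w w' g g' : ℕ → ℝ}

theorem renewal_eq (hw0 : w 0 = 1) (hg0 : g 0 = 1) (n : ℕ) :
    renewal w g n = g n + ∑ s ∈ range n, w s * (g (n - 1 - s) - g (n - s)) := by
  have shift : ∑ s ∈ range n, w (s + 1) * g (n - 1 - s) =
      ∑ s ∈ range n, w (s + 1) * g (n - (s + 1)) :=
    Finset.sum_congr rfl fun s _ => by rw [Nat.sub_sub, Nat.add_comm 1 s]
  have h1 := Finset.sum_range_succ' (fun s => w s * g (n - s)) n
  have h2 := Finset.sum_range_succ (fun s => w s * g (n - s)) n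
  simp only [renewal, sub_mul, mul_sub, Finset.sum_sub_distrib, shift]
  simp only [Nat.sub_zero, Nat.sub_self, hw0, hg0] at h1 h2
  linarith

theorem le_renewal (hw0 : w 0 = 1) (hg0 : g 0 = 1) (hw : ∀ s, 0 ≤ w s) (hg : Antitone g)
    (n : ℕ) : g n ≤ renewal w g n := by
  rw [renewal_eq hw0 hg0]
  refine le_add_of_nonneg_right (Finset.sum_nonneg fun s _ => ?_)
  exact mul_nonneg (hw s) (sub_nonneg.mpr (hg (by omega)))

theorem renewal_le_renewal_left (hw0 : w 0 = 1) (hw'0 : w' 0 = 1) (hg0 : g 0 = 1)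
    (hww' : ∀ s, w s ≤ w' s) (hg : Antitone g) (n : ℕ) : renewal w g n ≤ renewal w' g n := by
  rw [renewal_eq hw0 hg0, renewal_eq hw'0 hg0]
  gcongr with s
  · exact sub_nonneg.mpr (hg (by omega))
  · exact hww' s

theorem renewal_le_renewal_right (hw : Antitone w) {n : ℕ} (hgg' : ∀ u < n, g u ≤ g' u) :
    renewal w g n ≤ renewal w g' n := by
  unfold renewal
  gcongr with s hs
  · exact sub_nonneg.mpr (hw (Nat.le_succ s))
  · exact hgg' _ (by have := Finset.mem_range.mp hs; omega)

end Renewal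

section FirstPassage

variable {ι : Type*} [DecidableEq ι] {P : Matrix ι ι ℝ} {s t : Finset ι} {J x : ι}

theorem sum_mul_eq_of_gate (hJt : J ∉ t) (hgate : ∀ y, y ∉ t → y ≠ J → P x y = 0)
    {u : Finset ι} (hu : insert J t ⊆ u) (f : ι → ℝ) :
    ∑ y ∈ u, P x y * f y = P x J * f J + ∑ y ∈ t, P x y * f y := by
  rw [← Finset.sum_insert (f := fun y => P x y * f y) hJt]
  refine (Finset.sum_subset hu fun y _ hy => ?_).symm
  rw [Finset.mem_insert, not_or] at hy
  rw [hgate y hy.2 hy.1, zero_mul]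

theorem survivalIn_eq_renewal [Fintype ι] (hP1 : ∀ x, ∑ y, P x y = 1) (hts : t ⊆ s)
    (hJs : J ∈ s) (hJt : J ∉ t) (hgate : ∀ x ∈ t, ∀ y, y ∉ t → y ≠ J → P x y = 0) (n : ℕ) (hx : x ∈ t) :
    survivalIn P s n x =
      renewal (fun r => survivalIn P t r x) (fun r => survivalIn P s r J) n := by
  induction n generalizing x with
  | zero => simp [renewal]
  | succ n ih =>
    have hexit : P x J = survivalIn P t 0 x - survivalIn P t 1 x := by
      have := sum_mul_eq_of_gate hJt (hgate x hx) (Finset.subset_univ _) fun _ => 1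
      simp only [mul_one, hP1] at this
      simp only [survivalIn_zero, survivalIn_succ, mul_one]
      linarith
    have hstep : ∑ y ∈ t, P x y * survivalIn P s n y = survivalIn P t (n + 1) x +
        ∑ r ∈ range n, (survivalIn P t (r + 1) x - survivalIn P t (r + 2) x) *
          survivalIn P s (n - 1 - r) J := by
      rw [Finset.sum_congr rfl fun y hy => by rw [ih hy]]
      simp only [renewal, survivalIn_succ, mul_add, Finset.sum_add_distrib, Finset.mul_sum,
        Finset.sum_mul, mul_sub, sub_mul, Finset.sum_sub_distrib]
      rw [Finset.sum_comm (s := t), Finset.sum_comm (s := t)]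
      simp only [mul_assoc]
    rw [survivalIn_succ, sum_mul_eq_of_gate hJt (hgate x hx) (Finset.insert_subset hJs hts),
      hstep, hexit, renewal, Finset.sum_range_succ']
    simp only [Nat.add_sub_cancel, Nat.sub_zero, Nat.sub_add_eq, Nat.sub_right_comm _ _ 1]
    ring

end FirstPassage

theorem sum_pow_submatrix_apply_eq_survivalIn {ι κ : Type*} [Fintype κ] [DecidableEq κ] (P : Matrix ι ι ℝ)
    (e : κ ↪ ι) (n : ℕ) (x : κ) :
    ∑ j, (P.submatrix e e ^ n) x j = survivalIn P (univ.map e) n (e x) := by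
  induction n generalizing x with
  | zero => simp [Matrix.one_apply]
  | succ n ih =>
    simp only [pow_succ', Matrix.mul_apply, survivalIn_succ, Finset.sum_map, ← ih,
      Finset.mul_sum, Matrix.submatrix_apply]
    exact Finset.sum_comm

theorem hitSurvival0_eq_survivalIn {k : ℕ} (P : Matrix (Fin (k + 1)) (Fin (k + 1)) ℝ)
    (h : ℕ) (h1 : 0 < h) (h2 : h ≤ k) (n : ℕ) :
    hitSurvival0 P h h1 h2 n = survivalIn P (Iio ⟨h, Nat.lt_succ_of_le h2⟩) n 0 := by
  have hIio : univ.map (Fin.castLEEmb (h2.trans k.le_succ)) = Iio ⟨h, Nat.lt_succ_of_le h2⟩ := by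
    ext y
    simp only [mem_map, mem_univ, true_and, Fin.coe_castLEEmb, mem_Iio, Fin.lt_def]
    exact ⟨fun ⟨a, ha⟩ => ha ▸ a.isLt, fun hy => ⟨⟨y, hy⟩, rfl⟩⟩
  rw [hitSurvival0, ← Fin.coe_castLEEmb, sum_pow_submatrix_apply_eq_survivalIn, hIio]
  rfl

theorem IsStochastic.apply_eq_zero_of_add_eq_one {N : ℕ} {P : Matrix (Fin N) (Fin N) ℝ}
    (hP : IsStochastic P) {x a b y : Fin N} (hab : a ≠ b) (hxab : P x a + P x b = 1)
    (hya : y ≠ a) (hyb : y ≠ b) : P x y = 0 := by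
  have hsub := Finset.sum_le_sum_of_subset_of_nonneg (Finset.subset_univ {y, a, b})
    fun z _ _ => hP.1 x z
  rw [Finset.sum_insert (by simp [hya, hyb]), Finset.sum_pair hab, hP.2 x] at hsub
  linarith [hP.1 x y]

section SkipFree

variable {k : ℕ} {P : Matrix (Fin (k + 1)) (Fin (k + 1)) ℝ}

theorem SkipFree.apply_eq_zero_of_mem_Iio (hsf : SkipFree P) {x y l : Fin (k + 1)}
    (hx : x ∈ Iio l) (hy : y ∉ Iio l) (hyl : y ≠ l) : P x y = 0 := by
  refine hsf x y ?_
  simp only [mem_Iio, not_lt, Fin.lt_def] at hx hy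
  have := Fin.val_ne_of_ne hyl
  omega

theorem survivalIn_Iio_eq_renewal (hP : IsStochastic P) (hsf : SkipFree P) {l j x : Fin (k + 1)}
    (hlj : l < j) (hxl : x < l) (n : ℕ) :
    survivalIn P (Iio j) n x =
      renewal (fun r => survivalIn P (Iio l) r x) (fun r => survivalIn P (Iio j) r l) n :=
  survivalIn_eq_renewal hP.2 (Iio_subset_Iio hlj.le) (mem_Iio.2 hlj) notMem_Iio_self
    (fun _ hx _ hy hyl => hsf.apply_eq_zero_of_mem_Iio hx hy hyl) n (mem_Iio.2 hxl)

theorem survivalIn_Iio_le_survivalIn_zero (hP : IsStochastic P) (hsf : SkipFree P)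
    {l j : Fin (k + 1)} (hlj : l < j) (n : ℕ) :
    survivalIn P (Iio j) n l ≤ survivalIn P (Iio j) n 0 := by
  rcases eq_or_ne l 0 with rfl | hl0
  · exact le_rfl
  rw [survivalIn_Iio_eq_renewal hP hsf hlj (Fin.pos_iff_ne_zero.2 hl0)]
  exact le_renewal rfl rfl (fun r => survivalIn_nonneg hP.1 _ r _)
    (survivalIn_antitone hP.1 hP.2 _ _) n

theorem survivalIn_Iio_succ_le_mul (hP : IsStochastic P) (hsf : SkipFree P) {x j : Fin (k + 1)}
    (hxj : x < j) (n : ℕ) :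
    survivalIn P (Iio j) (n + 1) x ≤ (1 - P x j) * survivalIn P (Iio j) n 0 := by
  have hrow : P x j + ∑ y ∈ Iio j, P x y = 1 := by
    simpa [hP.2 x] using (sum_mul_eq_of_gate notMem_Iio_self
      (fun y hy hyj => hsf.apply_eq_zero_of_mem_Iio (mem_Iio.2 hxj) hy hyj)
      (Finset.subset_univ _) fun _ => 1).symm
  calc survivalIn P (Iio j) (n + 1) x ≤ ∑ y ∈ Iio j, P x y * survivalIn P (Iio j) n 0 :=
        Finset.sum_le_sum fun y hy => mul_le_mul_of_nonneg_left
          (survivalIn_Iio_le_survivalIn_zero hP hsf (mem_Iio.1 hy) n) (hP.1 x y)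
    _ = (1 - P x j) * survivalIn P (Iio j) n 0 := by
        rw [← Finset.sum_mul, ← hrow, add_sub_cancel_left]

theorem survivalIn_Iio_succ_le_of_reset {Pt : Matrix (Fin (k + 1)) (Fin (k + 1)) ℝ}
    (hP : IsStochastic P) (hsf : SkipFree P) (hPt : IsStochastic Pt) {x j : Fin (k + 1)}
    (hxj : (x : ℕ) + 1 = j) (hup : Pt x j ≤ P x j) (hreset : Pt x 0 + Pt x j = 1) {n : ℕ}
    (hn : survivalIn P (Iio j) n 0 ≤ survivalIn Pt (Iio j) n 0) :
    survivalIn P (Iio j) (n + 1) x ≤ survivalIn Pt (Iio j) (n + 1) x := by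
  have hxj' : x < j := Fin.lt_def.2 (by omega)
  have hj0 : 0 < j := (Fin.zero_le x).trans_lt hxj'
  have hreset' : survivalIn Pt (Iio j) (n + 1) x = Pt x 0 * survivalIn Pt (Iio j) n 0 := by
    refine Finset.sum_eq_single_of_mem 0 (mem_Iio.2 hj0) fun y hy hy0 => ?_
    rw [hPt.apply_eq_zero_of_add_eq_one hj0.ne hreset hy0 (mem_Iio.1 hy).ne, zero_mul]
  calc survivalIn P (Iio j) (n + 1) x ≤ (1 - P x j) * survivalIn P (Iio j) n 0 :=
        survivalIn_Iio_succ_le_mul hP hsf hxj' n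
    _ ≤ (1 - Pt x j) * survivalIn Pt (Iio j) n 0 := by
        gcongr
        · exact survivalIn_nonneg hP.1 _ n 0
        · linarith [hPt.1 x 0]
    _ = survivalIn Pt (Iio j) (n + 1) x := by rw [hreset', ← hreset, add_sub_cancel_right]

theorem survivalIn_Iio_le_of_reset {Pt : Matrix (Fin (k + 1)) (Fin (k + 1)) ℝ}
    (hP : IsStochastic P) (hPt : IsStochastic Pt) (hsfP : SkipFree P) (hsfPt : SkipFree Pt)
    {l j : Fin (k + 1)} (hl0 : 0 < l) (hlj : (l : ℕ) + 1 = j)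
    (hlow : ∀ n, survivalIn P (Iio l) n 0 ≤ survivalIn Pt (Iio l) n 0)
    (hup : Pt l j ≤ P l j) (hreset : Pt l 0 + Pt l j = 1) (n : ℕ) :
    survivalIn P (Iio j) n 0 ≤ survivalIn Pt (Iio j) n 0 := by
  have hlj' : l < j := Fin.lt_def.2 (by omega)
  induction n using Nat.strong_induction_on with
  | _ n ih =>
  rw [survivalIn_Iio_eq_renewal hP hsfP hlj' hl0, survivalIn_Iio_eq_renewal hPt hsfPt hlj' hl0]
  refine (renewal_le_renewal_left rfl rfl rfl hlow (survivalIn_antitone hP.1 hP.2 _ _) n).trans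
    (renewal_le_renewal_right (survivalIn_antitone hPt.1 hPt.2 _ _) fun u hu => ?_)
  rcases u with _ | u
  · exact le_rfl
  · exact survivalIn_Iio_succ_le_of_reset hP hsfP hPt hlj hup hreset (ih u (by omega))

end SkipFree

/-- Theorem 3 (De Santis–Spizzichino): for two skip-free chains started at `0`,
if `T_m ⪯_st T̃_m` for some `1 ≤ m ≤ k-1` and, for every state `m ≤ i ≤ k-1`,
`p̃_{i,i+1} ≤ p_{i,i+1}` and `p̃_{i,0} + p̃_{i,i+1} = 1`, then
`T_i ⪯_st T̃_i` for every `m ≤ i ≤ k`. -/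
theorem hitting_times_st_order_above_m
    (k : ℕ) (P Pt : Matrix (Fin (k + 1)) (Fin (k + 1)) ℝ)
    (hP : IsStochastic P) (hPt : IsStochastic Pt)
    (hsfP : SkipFree P) (hsfPt : SkipFree Pt)
    (m : ℕ) (hm1 : 1 ≤ m) (hm2 : m ≤ k - 1)
    (hTm : ∀ n : ℕ, hitSurvival0 P m (by omega) (by omega) n ≤
      hitSurvival0 Pt m (by omega) (by omega) n)
    (hii : ∀ i : ℕ, ∀ (him : m ≤ i) (hik : i ≤ k - 1),
      Pt ⟨i, by omega⟩ ⟨i + 1, by omega⟩ ≤ P ⟨i, by omega⟩ ⟨i + 1, by omega⟩ ∧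
      Pt ⟨i, by omega⟩ ⟨0, by omega⟩ + Pt ⟨i, by omega⟩ ⟨i + 1, by omega⟩ = 1) :
    ∀ i : ℕ, ∀ (him : m ≤ i) (hik : i ≤ k), ∀ n : ℕ,
      hitSurvival0 P i (by omega) (by omega) n ≤ hitSurvival0 Pt i (by omega) (by omega) n := by
  intro i him
  induction i, him using Nat.le_induction with
  | base => exact fun _ => hTm
  | succ i hmi ih =>
    intro hik n
    obtain ⟨hup, hreset⟩ := hii i hmi (by omega)
    rw [hitSurvival0_eq_survivalIn, hitSurvival0_eq_survivalIn]
    refine survivalIn_Iio_le_of_reset hP hPt hsfP hsfPt (l := ⟨i, by omega⟩)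
      (Fin.lt_def.2 (Nat.lt_of_lt_of_le hm1 hmi)) rfl (fun n => ?_) hup hreset n
    have hlow := ih (by omega) n
    rwa [hitSurvival0_eq_survivalIn, hitSurvival0_eq_survivalIn] at hlow
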